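/- For every positive integer n, the persistent reversible pebbling number of the directed path on n vertices satisfies rev(Ch_n) ≤ ⌈log₂ n⌉ + 1. -/

import Mathlib

/-- A system for pebbling: a finite directed tree given by a root and a parent
function (edges are directed from each non-root vertex to its parent, i.e.
toward the root). -/
structure PebSys (V : Type) where
  root : V
  parent : V → V

/-- `T` is a genuine rooted directed tree: the root is a fixed point of the
parent map and every vertex reaches the root by iterating the parent map. -/
def IsRDTree {V : Type} [Fintype V] (T : PebSys V) : Prop :=
  T.parent T.root = T.root ∧ ∀ v : V, ∃ k : ℕ, T.parent^[k] v = T.root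

/-- One legal move of the reversible pebble game, from configuration `P` to
configuration `Q`: exactly one vertex `v` is pebbled or unpebbled, and all
in-neighbours of `v` (vertices `u ≠ v` with `parent u = v`) carry pebbles
in `P`. -/
def PebStep {V : Type} [DecidableEq V] (T : PebSys V) (P Q : Finset V) : Prop :=
  ∃ v : V, ((v ∉ P ∧ Q = insert v P) ∨ (v ∉ Q ∧ P = insert v Q)) ∧
    ∀ u : V, u ≠ v → T.parent u = v → u ∈ P

/-- A persistent reversible pebbling: starts with no pebbles, ends with a
pebble exactly on the root, consecutive configurations are legal moves. -/
def IsPebbling {V : Type} [DecidableEq V] (T : PebSys V) (L : List (Finset V)) : Prop :=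
  L.head? = some ∅ ∧ L.getLast? = some {T.root} ∧ L.Chain' (PebStep T)

/-- A visiting reversible pebbling: starts and ends with no pebbles, and the
root carries a pebble at some point. -/
def IsVisPebbling {V : Type} [DecidableEq V] (T : PebSys V) (L : List (Finset V)) : Prop :=
  L.head? = some ∅ ∧ L.getLast? = some ∅ ∧ (∃ P ∈ L, T.root ∈ P) ∧ L.Chain' (PebStep T)

/-- The space of a pebbling: the maximum number of pebbles in any configuration. -/
def pebSpace {V : Type} (L : List (Finset V)) : ℕ := (L.map Finset.card).foldr max 0

/-- The persistent reversible pebbling number `rev`. -/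
noncomputable def revNum {V : Type} [DecidableEq V] (T : PebSys V) : ℕ :=
  sInf {k | ∃ L : List (Finset V), IsPebbling T L ∧ pebSpace L ≤ k}

/-- The visiting reversible pebbling number `vrev`. -/
noncomputable def vrevNum {V : Type} [DecidableEq V] (T : PebSys V) : ℕ :=
  sInf {k | ∃ L : List (Finset V), IsVisPebbling T L ∧ pebSpace L ≤ k}

/-- The directed path `Ch_n` on `n` vertices `0, …, n - 1`, with all edges
directed toward the end `0`, which is the root (unique sink):
the parent of vertex `i > 0` is `i - 1`. -/
def ChSys (n : ℕ) (hpos : 0 < n) : PebSys (Fin n) where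
  root := ⟨0, hpos⟩
  parent := fun i => ⟨i.val - 1, lt_of_le_of_lt (Nat.sub_le _ _) i.isLt⟩

/-!
To pebble vertex `a` of a segment of `m` vertices of the chain whose upper neighbour
`a + m` already carries a pebble (or does not exist), pebble the midpoint
`k = a + ⌊m/2⌋` using the upper half, then `a` using the lower half (now capped by `k`),
and finally run the first phase backwards to remove `k`. Each level of the recursion
holds one extra pebble and the segment length halves, so `⌈log₂ m⌉ + 1` pebbles suffice.
-/

open Relation

section General

variable {V : Type} [DecidableEq V] {T : PebSys V}

def PebStepWithin (T : PebSys V) (s : ℕ) (P Q : Finset V) : Prop :=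
  PebStep T P Q ∧ P.card ≤ s ∧ Q.card ≤ s

theorem PebStep.symm {P Q : Finset V} (h : PebStep T P Q) : PebStep T Q P := by
  obtain ⟨v, hPQ | hQP, hin⟩ := h
  · exact ⟨v, Or.inr hPQ, fun u hu hpar => hPQ.2 ▸ Finset.mem_insert_of_mem (hin u hu hpar)⟩
  · refine ⟨v, Or.inl hQP, fun u hu hpar => ?_⟩
    have := hin u hu hpar
    rw [hQP.2, Finset.mem_insert] at this
    exact this.resolve_left hu

theorem PebStepWithin.symm {s : ℕ} {P Q : Finset V} (h : PebStepWithin T s P Q) :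
    PebStepWithin T s Q P :=
  ⟨h.1.symm, h.2.2, h.2.1⟩

theorem reflTransGen_pebStepWithin_symm {s : ℕ} {P Q : Finset V}
    (h : ReflTransGen (PebStepWithin T s) P Q) : ReflTransGen (PebStepWithin T s) Q P :=
  ReflTransGen.mono (fun _ _ => PebStepWithin.symm) _ _ (reflTransGen_swap.mpr h)

theorem reflTransGen_pebStepWithin_mono {s t : ℕ} (hst : s ≤ t) {P Q : Finset V}
    (h : ReflTransGen (PebStepWithin T s) P Q) : ReflTransGen (PebStepWithin T t) P Q :=
  ReflTransGen.mono (fun _ _ h => ⟨h.1, h.2.1.trans hst, h.2.2.trans hst⟩) _ _ h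

theorem exists_pebStep_chain_of_reflTransGen {s : ℕ} {P Q : Finset V}
    (h : ReflTransGen (PebStepWithin T s) P Q) (hP : P.card ≤ s) :
    ∃ L : List (Finset V), L.head? = some P ∧ L.getLast? = some Q ∧
      L.IsChain (PebStep T) ∧ pebSpace L ≤ s := by
  induction h using ReflTransGen.head_induction_on with
  | refl => exact ⟨[Q], rfl, rfl, List.isChain_singleton _, by simpa [pebSpace] using hP⟩
  | @head P R hPR _ ih =>
    obtain ⟨L, hhead, hlast, hchain, hspace⟩ := ih hPR.2.2
    refine ⟨P :: L, rfl, ?_, ?_, max_le hP hspace⟩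
    · cases L with
      | nil => simp at hhead
      | cons _ _ => rwa [List.getLast?_cons_cons]
    · refine List.isChain_cons.mpr ⟨fun R' hR' => ?_, hchain⟩
      rw [hhead, Option.mem_def, Option.some_inj] at hR'
      exact hR' ▸ hPR.1

theorem revNum_le_of_reflTransGen {s : ℕ}
    (h : ReflTransGen (PebStepWithin T s) ∅ {T.root}) : revNum T ≤ s := by
  obtain ⟨L, hhead, hlast, hchain, hspace⟩ :=
    exists_pebStep_chain_of_reflTransGen h (by simp)
  exact Nat.sInf_le ⟨L, ⟨hhead, hlast, hchain⟩, hspace⟩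

end General

section Chain

variable {n : ℕ} (hn : 0 < n)

theorem chSys_reflTransGen_insert_of_succ_mem (a : Fin n) {C : Finset (Fin n)}
    (hC : ∀ u : Fin n, (u : ℕ) = a + 1 → u ∈ C) :
    ReflTransGen (PebStepWithin (ChSys n hn) (C.card + 1)) C (insert a C) := by
  by_cases ha : a ∈ C
  · rw [Finset.insert_eq_of_mem ha]
  refine ReflTransGen.single ⟨⟨a, Or.inl ⟨ha, rfl⟩, fun u hua hpar => hC u ?_⟩,
    by omega, Finset.card_insert_le a C⟩
  have := congrArg Fin.val hpar
  have := Fin.val_ne_of_ne hua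
  simp only [ChSys] at *
  omega

theorem chSys_reflTransGen_insert_of_le_two_pow (c : ℕ) (a : Fin n) {m : ℕ} (hm : 0 < m)
    (hmc : m ≤ 2 ^ c) (ham : (a : ℕ) + m ≤ n) {C : Finset (Fin n)}
    (hC : ∀ u : Fin n, (u : ℕ) = a + m → u ∈ C) :
    ReflTransGen (PebStepWithin (ChSys n hn) (C.card + c + 1)) C (insert a C) := by
  induction c generalizing a m C with
  | zero =>
    obtain rfl : m = 1 := by rw [pow_zero] at hmc; omega
    exact chSys_reflTransGen_insert_of_succ_mem hn a hC
  | succ c ih =>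
    by_cases hm1 : m = 1
    · subst hm1
      exact reflTransGen_pebStepWithin_mono (by omega)
        (chSys_reflTransGen_insert_of_succ_mem hn a hC)
    have hpow := pow_succ 2 c
    let k : Fin n := ⟨a + m / 2, by omega⟩
    have hk : (k : ℕ) + (m - m / 2) = a + m := by simp only [k]; omega
    have upper : ∀ D : Finset (Fin n), (∀ u : Fin n, (u : ℕ) = a + m → u ∈ D) →
        ReflTransGen (PebStepWithin (ChSys n hn) (D.card + c + 1)) D (insert k D) :=
      fun D hD => ih k (by omega) (by omega) (by omega) (hk ▸ hD)
    have lower := ih a (m := m / 2) (C := insert k C) (by omega) (by omega) (by omega)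
      fun u hu => Finset.mem_insert.mpr (Or.inl (Fin.ext hu))
    have back := reflTransGen_pebStepWithin_symm
      (upper (insert a C) fun u hu => Finset.mem_insert_of_mem (hC u hu))
    rw [Finset.insert_comm] at back
    have hcardk := Finset.card_insert_le k C
    have hcarda := Finset.card_insert_le a C
    exact ((reflTransGen_pebStepWithin_mono (by omega) (upper C hC)).trans
      (reflTransGen_pebStepWithin_mono (by omega) lower)).trans
      (reflTransGen_pebStepWithin_mono (by omega) back)

end Chain

/-- For every positive integer `n`,
`rev(Ch_n) ≤ ⌈log₂ n⌉ + 1`. -/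
theorem rev_chain_le_clog (n : ℕ) (hn : 0 < n) :
    revNum (ChSys n hn) ≤ Nat.clog 2 n + 1 := by
  have h := chSys_reflTransGen_insert_of_le_two_pow hn (Nat.clog 2 n) ⟨0, hn⟩ hn
    (Nat.le_pow_clog one_lt_two n) (zero_add n).le (C := ∅) fun u hu => absurd u.isLt (by omega)
  rw [Finset.card_empty, zero_add, insert_empty_eq] at h
  exact revNum_le_of_reflTransGen h
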